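/- A hypergroup E is a module over the Krasner hyperfield 𝕂 if and only if x + x = {0, x} for every nonzero x ∈ E. -/

import Mathlib

universe u v

/-- A (canonical) hypergroup structure on a type `M`: a commutative, associative
multivalued addition with a unique neutral element `0`, unique negatives, and
reversibility. -/
structure HypergroupOn (M : Type u) where
  add : M → M → Set M
  add_comm : ∀ a b, add a b = add b a
  add_assoc : ∀ a b c, (⋃ x ∈ add a b, add x c) = (⋃ y ∈ add b c, add a y)
  zero : M
  add_zero : ∀ a, add a zero = {a}
  zero_unique : ∀ z : M, (∀ a, add a z = {a}) → z = zero
  neg : M → M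
  zero_mem_add_neg : ∀ a, zero ∈ add a (neg a)
  neg_unique : ∀ a b, zero ∈ add a b → b = neg a
  reversible : ∀ a b c : M, a ∈ add b c → c ∈ add a (neg b)

/-- A hyperring structure: a hypergroup with a compatible commutative monoid
multiplication distributing over the hyperaddition. -/
structure HyperringOn (H : Type u) extends HypergroupOn H where
  mul : H → H → H
  mul_comm : ∀ a b, mul a b = mul b a
  mul_assoc : ∀ a b c, mul (mul a b) c = mul a (mul b c)
  one : H
  one_mul : ∀ a, mul one a = a
  zero_mul : ∀ a, mul zero a = zero
  distrib : ∀ a b c, (mul a) '' (add b c) = add (mul a b) (mul a c)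

/-- A module structure over a hyperring `R` on a type `M`. -/
structure HModuleOn {H : Type u} (R : HyperringOn H) (M : Type v)
    extends HypergroupOn M where
  smul : H → M → M
  one_smul : ∀ m, smul R.one m = m
  zero_smul : ∀ m, smul R.zero m = zero
  mul_smul : ∀ r s m, smul (R.mul r s) m = smul r (smul s m)
  smul_add : ∀ r m n, (smul r) '' (add m n) = add (smul r m) (smul r n)
  add_smul : ∀ r s m, (fun t => smul t m) '' (R.add r s) = add (smul r m) (smul s m)

/-- A submodule of a module over a hyperring: contains `0`, is closed under the
(full) hyperaddition, negation and the scalar action. -/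
structure IsHSubmodule {H : Type u} {R : HyperringOn H} {M : Type v}
    (hM : HModuleOn R M) (A : Set M) : Prop where
  zero_mem : hM.zero ∈ A
  add_mem : ∀ a ∈ A, ∀ b ∈ A, hM.add a b ⊆ A
  neg_mem : ∀ a ∈ A, hM.neg a ∈ A
  smul_mem : ∀ r : H, ∀ a ∈ A, hM.smul r a ∈ A

/-- The equivalence relation on a module `B` defined by a submodule `A`:
`x ≡ y` iff `x + A = y + A`. -/
def qsetoid {M : Type v} (G : HypergroupOn M) (A : Set M) : Setoid M where
  r x y := (⋃ a ∈ A, G.add x a) = (⋃ a ∈ A, G.add y a)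
  iseqv := ⟨fun _ => rfl, Eq.symm, Eq.trans⟩

/-- The hyperaddition induced on the quotient `B/≡`:
`[x] + [y] = {[z] | z ∈ x' + y' for some x' ≡ x, y' ≡ y}`. -/
def qadd {M : Type v} (G : HypergroupOn M) (A : Set M)
    (X Y : Quotient (qsetoid G A)) : Set (Quotient (qsetoid G A)) :=
  {Z | ∃ x y z : M, Quotient.mk (qsetoid G A) x = X ∧
      Quotient.mk (qsetoid G A) y = Y ∧ z ∈ G.add x y ∧
      Quotient.mk (qsetoid G A) z = Z}

/-- `K` is the Krasner hyperfield: the hyperring structure on `{0, 1}` (modelled on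
`Bool` with `0 = false`, `1 = true`) with `1 + 1 = {0, 1}`, `1 + 0 = {1}`,
`0 + 0 = {0}` and the usual multiplication. -/
def IsKrasnerHyperring (K : HyperringOn Bool) : Prop :=
  K.zero = false ∧ K.one = true ∧
  K.add true true = {false, true} ∧ K.add true false = {true} ∧
  K.add false false = {false}

/-! In a `𝕂`-module the action is forced, `1 • x = x` and `0 • x = 0`, so the axiom
`(1 + 1) • x = 1 • x + 1 • x` reads `{0, x} = x + x`. Conversely, on a hypergroup with
`x + x = {0, x}` this action satisfies every module axiom; `0 • (a + b) = 0 • a + 0 • b`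
holds because hypersums are never empty. -/

namespace HypergroupOn

variable {M : Type v} (G : HypergroupOn M)

/-- `a ∈ a + 0 ⊆ a + (b + (-b)) = (a + b) + (-b)`. -/
theorem add_nonempty (a b : M) : (G.add a b).Nonempty := by
  have ha : a ∈ ⋃ y ∈ G.add b (G.neg b), G.add a y :=
    Set.mem_biUnion (G.zero_mem_add_neg b) (by rw [G.add_zero]; rfl)
  rw [← G.add_assoc] at ha
  obtain ⟨x, hx, -⟩ := Set.mem_iUnion₂.mp ha
  exact ⟨x, hx⟩

theorem forall_add_self_eq_pair_iff :
    (∀ x, x ≠ G.zero → G.add x x = {G.zero, x}) ↔ ∀ x, G.add x x = {G.zero, x} := by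
  refine ⟨fun h x => ?_, fun h x _ => h x⟩
  by_cases hx : x = G.zero
  · rw [hx, G.add_zero, Set.pair_eq_singleton]
  · exact h x hx

end HypergroupOn

theorem HModuleOn.add_self_eq_image {H : Type u} {R : HyperringOn H} {M : Type v}
    (m : HModuleOn R M) (x : M) :
    m.add x x = (fun t => m.smul t x) '' R.add R.one R.one := by
  rw [m.add_smul, m.one_smul]

namespace IsKrasnerHyperring

variable {K : HyperringOn Bool}

theorem mul_eq_and (hK : IsKrasnerHyperring K) (a b : Bool) : K.mul a b = (a && b) := by
  obtain ⟨hz, ho, -⟩ := hK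
  cases a
  · rw [← hz, K.zero_mul, hz, Bool.false_and]
  · rw [← ho, K.one_mul, ho, Bool.true_and]

theorem add_false_true (hK : IsKrasnerHyperring K) : K.add false true = {true} := by
  rw [K.add_comm]
  exact hK.2.2.2.1

theorem add_self_eq_pair (hK : IsKrasnerHyperring K) {E : Type v} (m : HModuleOn K E)
    (x : E) : m.add x x = {m.zero, x} := by
  obtain ⟨hz, ho, htt, -⟩ := hK
  rw [m.add_self_eq_image, ho, htt, Set.image_pair, ← hz, m.zero_smul, ← ho, m.one_smul]

end IsKrasnerHyperring

namespace HypergroupOn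

variable {E : Type v} (G : HypergroupOn E)

def krasnerSMul (r : Bool) (x : E) : E :=
  bif r then x else G.zero

def toKrasnerModule {K : HyperringOn Bool} (hK : IsKrasnerHyperring K)
    (hG : ∀ x, G.add x x = {G.zero, x}) : HModuleOn K E where
  toHypergroupOn := G
  smul := G.krasnerSMul
  one_smul _ := by rw [hK.2.1]; rfl
  zero_smul _ := by rw [hK.1]; rfl
  mul_smul r s x := by cases r <;> simp [hK.mul_eq_and, krasnerSMul]
  smul_add r x y := by
    cases r
    · change (fun _ => G.zero) '' G.add x y = G.add G.zero G.zero
      rw [G.add_zero, (G.add_nonempty x y).image_const]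
    · exact Set.image_id _
  add_smul r s x := by
    have hft := hK.add_false_true
    obtain ⟨-, -, htt, htf, hff⟩ := hK
    cases r <;> cases s <;>
      simp only [krasnerSMul, cond_true, cond_false, htt, htf, hff, hft,
        Set.image_singleton, Set.image_pair, G.add_zero, hG]
    rw [G.add_comm, G.add_zero]

end HypergroupOn

theorem stmt17 (K : HyperringOn Bool) (hK : IsKrasnerHyperring K)
    {E : Type v} (G : HypergroupOn E) :
    (∃ m : HModuleOn K E, m.toHypergroupOn = G) ↔
    ∀ x : E, x ≠ G.zero → G.add x x = {G.zero, x} := by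
  rw [G.forall_add_self_eq_pair_iff]
  constructor
  · rintro ⟨m, rfl⟩
    exact hK.add_self_eq_pair m
  · intro hG
    exact ⟨G.toKrasnerModule hK hG, rfl⟩
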